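/- arXiv:1907.12734 — 3 statements merged into one kernel-verified Lean document; each statement's English description precedes it below -/
import Mathlib

section
/- Any two distinct vertices of the Farey graph have at most two common neighbors. Equivalently: if (p,q) and (r,s) are coprime integer pairs with (r,s) ≠ ±(p,q), then the set of vertices [a,b] of the Farey graph satisfying |a·q − b·p| = 1 and |a·s − b·r| = 1 has cardinality at most 2. In particular, between any two vertices of the Farey graph at distance 2 there are at most two geodesics of length 2. -/
/-- A Farey pair: a pair of coprime integers. -/
abbrev FareyPair : Type := {v : ℤ × ℤ // IsCoprime v.1 v.2}

/-- Identify a coprime pair of integers with its negative. -/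
instance fareySetoid : Setoid FareyPair where
  r a b := a.1 = b.1 ∨ a.1 = -b.1
  iseqv := by
    refine ⟨fun a => Or.inl rfl, ?_, ?_⟩
    · rintro a b (h | h)
      · exact Or.inl h.symm
      · exact Or.inr (by rw [h, neg_neg])
    · rintro a b c (h1 | h1) (h2 | h2)
      · exact Or.inl (h1.trans h2)
      · exact Or.inr (h1.trans h2)
      · exact Or.inr (by rw [h1, h2])
      · exact Or.inl (by rw [h1, h2, neg_neg])

/-- Vertices of the Farey graph: coprime integer pairs up to sign. -/
abbrev FareyVertex : Type := Quotient fareySetoid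

/-- The Farey vertex `[p, q]` determined by a coprime pair `(p, q)`. -/
def fareyMk (p q : ℤ) (h : IsCoprime p q) : FareyVertex :=
  Quotient.mk fareySetoid ⟨(p, q), h⟩

/-- The absolute value of the determinant, descended to Farey vertices. -/
def fareyDetAbs : FareyVertex → FareyVertex → ℤ :=
  Quotient.lift₂ (fun a b : FareyPair => |a.1.1 * b.1.2 - a.1.2 * b.1.1|)
    (by
      rintro a b a' b' (h1 | h1) (h2 | h2)
      · simp only [h1, h2]
      · simp only [h1, h2, Prod.fst_neg, Prod.snd_neg]
        apply abs_eq_abs.mpr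
        right; ring
      · simp only [h1, h2, Prod.fst_neg, Prod.snd_neg]
        apply abs_eq_abs.mpr
        right; ring
      · simp only [h1, h2, Prod.fst_neg, Prod.snd_neg]
        apply abs_eq_abs.mpr
        left; ring)

lemma fareyDetAbs_comm (u v : FareyVertex) : fareyDetAbs u v = fareyDetAbs v u := by
  refine Quotient.inductionOn₂ u v fun a b => ?_
  show |a.1.1 * b.1.2 - a.1.2 * b.1.1| = |b.1.1 * a.1.2 - b.1.2 * a.1.1|
  rw [abs_sub_comm]
  exact congrArg abs (by ring)

/-- The Farey graph: coprime integer pairs up to sign, adjacent when the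
determinant is `±1`. -/
def FareyGraph : SimpleGraph FareyVertex where
  Adj u v := fareyDetAbs u v = 1
  symm := by
    constructor
    intro u v h
    rwa [fareyDetAbs_comm]
  loopless := by
    constructor
    intro u
    refine Quotient.inductionOn u fun a => ?_
    show ¬(|a.1.1 * a.1.2 - a.1.2 * a.1.1| = 1)
    rw [show a.1.1 * a.1.2 - a.1.2 * a.1.1 = 0 from by ring]
    simp

/-- A pair of integers forming a unimodular matrix with another pair is coprime. -/
lemma coprime_of_det (a b c d : ℤ) (h : |a * d - b * c| = 1) : IsCoprime a b := by
  rcases (abs_eq (by norm_num : (0:ℤ) ≤ 1)).mp h with h' | h'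
  · exact ⟨d, -c, by linear_combination h'⟩
  · exact ⟨-d, c, by linear_combination -h'⟩

/-!
A common neighbour `[a, b]` of `[p, q]` and `[r, s]` has determinants `p b - q a` and
`r b - s a` both equal to `±1`. Their product is independent of the sign of the representative
`(a, b)`, so it is a function of the vertex with values in `{1, -1}`. It is injective on the
neighbours of `[p, q]`: equal products force the pair of determinants to agree up to one common
sign, and `(a, b)` is recovered from its two determinants since `p s - q r ≠ 0` for distinct
vertices.
-/

def pairDet (x y : ℤ × ℤ) : ℤ := x.1 * y.2 - x.2 * y.1

lemma pairDet_self (x : ℤ × ℤ) : pairDet x x = 0 := by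
  rw [pairDet, mul_comm, sub_self]

lemma pairDet_neg_right (x y : ℤ × ℤ) : pairDet x (-y) = -pairDet x y := by
  simp only [pairDet, Prod.fst_neg, Prod.snd_neg]
  ring

lemma pairDet_sub_right (x y z : ℤ × ℤ) : pairDet x (y - z) = pairDet x y - pairDet x z := by
  simp only [pairDet, Prod.fst_sub, Prod.snd_sub]
  ring

lemma eq_zero_of_pairDet_eq_zero {x y z : ℤ × ℤ} (hxy : pairDet x y ≠ 0)
    (hx : pairDet x z = 0) (hy : pairDet y z = 0) : z = 0 := by
  simp only [pairDet] at hxy hx hy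
  have h₁ : (x.1 * y.2 - x.2 * y.1) * z.1 = 0 := by linear_combination -x.1 * hy + y.1 * hx
  have h₂ : (x.1 * y.2 - x.2 * y.1) * z.2 = 0 := by linear_combination -x.2 * hy + y.2 * hx
  exact Prod.ext ((mul_eq_zero.mp h₁).resolve_left hxy) ((mul_eq_zero.mp h₂).resolve_left hxy)

lemma eq_of_pairDet_eq {x y z w : ℤ × ℤ} (hxy : pairDet x y ≠ 0)
    (hx : pairDet x z = pairDet x w) (hy : pairDet y z = pairDet y w) : z = w :=
  sub_eq_zero.mp <| eq_zero_of_pairDet_eq_zero hxy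
    (by rw [pairDet_sub_right, hx, sub_self]) (by rw [pairDet_sub_right, hy, sub_self])

lemma eq_of_pairDet_mul_eq {x y z w : ℤ × ℤ} (hxy : pairDet x y ≠ 0) (hz : pairDet x z ≠ 0)
    (hx : pairDet x z = pairDet x w)
    (h : pairDet x z * pairDet y z = pairDet x w * pairDet y w) : z = w :=
  eq_of_pairDet_eq hxy hx <| mul_left_cancel₀ hz (by rw [h, hx])

lemma eq_or_eq_neg_of_pairDet_mul_eq {x y z w : ℤ × ℤ} (hxy : pairDet x y ≠ 0)
    (hz : |pairDet x z| = 1) (hw : |pairDet x w| = 1)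
    (h : pairDet x z * pairDet y z = pairDet x w * pairDet y w) : z = w ∨ z = -w := by
  have hz₀ : pairDet x z ≠ 0 := fun h₀ => by simp [h₀] at hz
  rcases abs_eq_abs.mp (hz.trans hw.symm) with hx | hx
  · exact Or.inl (eq_of_pairDet_mul_eq hxy hz₀ hx h)
  · refine Or.inr (eq_of_pairDet_mul_eq hxy hz₀ ?_ ?_)
    · rwa [pairDet_neg_right]
    · rw [pairDet_neg_right, pairDet_neg_right, neg_mul_neg, h]

lemma eq_or_eq_neg_of_pairDet_eq_zero {x y : ℤ × ℤ} (hx : IsCoprime x.1 x.2)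
    (hy : IsCoprime y.1 y.2) (h : pairDet x y = 0) : x = y ∨ x = -y := by
  obtain ⟨e, f, hef⟩ := hx
  obtain ⟨e', f', hef'⟩ := hy
  unfold pairDet at h
  -- `y = t • x`, and `t` is a unit because `y` is primitive
  set t := e * y.1 + f * y.2
  have h₁ : y.1 = t * x.1 := by linear_combination (-y.1) * hef - f * h
  have h₂ : y.2 = t * x.2 := by linear_combination (-y.2) * hef + e * h
  have ht : t * (e' * x.1 + f' * x.2) = 1 := by linear_combination hef' - e' * h₁ - f' * h₂
  rcases Int.isUnit_iff.mp (IsUnit.of_mul_eq_one _ ht) with h₀ | h₀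
  · left
    ext <;> simp [h₁, h₂, h₀]
  · right
    ext <;> simp [h₁, h₂, h₀]

lemma fareyDetAbs_mk (x y : FareyPair) :
    fareyDetAbs ⟦x⟧ ⟦y⟧ = |pairDet x.1 y.1| :=
  rfl

lemma fareyDetAbs_self (u : FareyVertex) : fareyDetAbs u u = 0 := by
  induction u using Quotient.inductionOn with
  | h x => exact abs_eq_zero.mpr (pairDet_self x.1)

lemma fareyDetAbs_eq_zero_iff {u v : FareyVertex} : fareyDetAbs u v = 0 ↔ u = v := by
  refine ⟨fun h => ?_, fun h => h ▸ fareyDetAbs_self u⟩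
  induction u, v using Quotient.inductionOn₂ with
  | h x y => exact Quotient.sound (eq_or_eq_neg_of_pairDet_eq_zero x.2 y.2 (abs_eq_zero.mp h))

def fareyDetProd (x y : ℤ × ℤ) : FareyVertex → ℤ :=
  Quotient.lift (fun z : FareyPair => pairDet x z.1 * pairDet y z.1) <| by
    rintro z w (h | h)
    · rw [h]
    · rw [h, pairDet_neg_right, pairDet_neg_right, neg_mul_neg]

lemma fareyDetProd_injOn {x y : FareyPair} (hxy : pairDet x.1 y.1 ≠ 0) :
    Set.InjOn (fareyDetProd x.1 y.1) (FareyGraph.neighborSet ⟦x⟧) := by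
  intro u hu v hv huv
  induction u, v using Quotient.inductionOn₂ with
  | h z w => exact Quotient.sound (eq_or_eq_neg_of_pairDet_mul_eq hxy hu hv huv)

lemma fareyDetProd_mapsTo (x y : FareyPair) :
    Set.MapsTo (fareyDetProd x.1 y.1) (FareyGraph.commonNeighbors ⟦x⟧ ⟦y⟧) {1, -1} := by
  intro w hw
  induction w using Quotient.inductionOn with
  | h z =>
    have hxz : |pairDet x.1 z.1| = 1 := hw.1
    have hyz : |pairDet y.1 z.1| = 1 := hw.2
    have hprod : |pairDet x.1 z.1 * pairDet y.1 z.1| = 1 := by rw [abs_mul, hxz, hyz, one_mul]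
    exact (abs_eq zero_le_one).mp hprod

/-- Any two distinct vertices of the Farey graph have at most two
common neighbors. -/
theorem farey_common_neighbors_le_two (u v : FareyVertex) (huv : u ≠ v) :
    {w : FareyVertex | FareyGraph.Adj u w ∧ FareyGraph.Adj v w}.encard ≤ 2 := by
  induction u, v using Quotient.inductionOn₂ with
  | h x y =>
    have hxy : pairDet x.1 y.1 ≠ 0 := by
      rw [← abs_ne_zero, ← fareyDetAbs_mk]
      exact mt fareyDetAbs_eq_zero_iff.mp huv
    calc (FareyGraph.commonNeighbors ⟦x⟧ ⟦y⟧).encard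
        = (fareyDetProd x.1 y.1 '' FareyGraph.commonNeighbors ⟦x⟧ ⟦y⟧).encard :=
          ((fareyDetProd_injOn hxy).mono fun _ hw => hw.1).encard_image.symm
      _ ≤ ({1, -1} : Set ℤ).encard := Set.encard_le_encard (fareyDetProd_mapsTo x y).image_subset
      _ = 2 := Set.encard_pair (by norm_num)
end

section
/- Let (p,q) and (r,s) be coprime integer pairs with |p·s − q·r| = 2. Then p+r and q+s are both even, p−r and q−s are both even, the integer pairs ((p+r)/2, (q+s)/2) and ((p−r)/2, (q−s)/2) are each coprime, and the common neighbors of [p,q] and [r,s] in the Farey graph are exactly the two vertices [(p+r)/2, (q+s)/2] and [(p−r)/2, (q−s)/2]; moreover these two vertices are adjacent to each other. -/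
lemma two_dvd_sub_of_two_dvd_det {p q r s : ℤ} (hpq : IsCoprime p q) (hrs : IsCoprime r s)
    (h : 2 ∣ p * s - q * r) : 2 ∣ p - r ∧ 2 ∣ q - s := by
  have key : ∀ a b c d : ZMod 2, IsCoprime a b → IsCoprime c d → a * d - b * c = 0 →
      a = c ∧ b = d := by
    unfold IsCoprime
    decide
  have hdet : ((p * s - q * r : ℤ) : ZMod 2) = 0 :=
    (ZMod.intCast_zmod_eq_zero_iff_dvd _ 2).mpr h
  push_cast at hdet
  obtain ⟨hpr, hqs⟩ := key _ _ _ _ hpq.intCast hrs.intCast hdet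
  rw [ZMod.intCast_eq_intCast_iff_dvd_sub] at hpr hqs
  exact ⟨dvd_sub_comm.mp hpr, dvd_sub_comm.mp hqs⟩

lemma abs_add_eq_one_and_abs_sub_eq_one_iff {u v : ℤ} :
    |u + v| = 1 ∧ |u - v| = 1 ↔ (u = 0 ∧ |v| = 1) ∨ (|u| = 1 ∧ v = 0) := by
  simp only [abs_eq zero_le_one]
  omega

/-- Cramer's rule for the unimodular matrix with rows `(A, B)` and `(C, D)`. -/
lemma eq_or_eq_neg_of_abs_det_eq_one {A B C D x y : ℤ} (hAD : |A * D - B * C| = 1)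
    (hu : A * y - B * x = 0) (hv : |C * y - D * x| = 1) :
    (x = A ∧ y = B) ∨ (x = -A ∧ y = -B) := by
  have hx : (A * D - B * C) * x = -(C * y - D * x) * A := by linear_combination C * hu
  have hy : (A * D - B * C) * y = -(C * y - D * x) * B := by linear_combination D * hu
  rw [abs_eq zero_le_one] at hAD hv
  rcases hAD with he | he <;> rcases hv with hv | hv <;> rw [he, hv] at hx hy <;> omega

lemma fareyMk_eq_fareyMk_iff {a b c d : ℤ} (hab : IsCoprime a b) (hcd : IsCoprime c d) :
    fareyMk a b hab = fareyMk c d hcd ↔ (a = c ∧ b = d) ∨ (a = -c ∧ b = -d) := by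
  simp only [fareyMk, Quotient.eq]
  show (a, b) = (c, d) ∨ (a, b) = -(c, d) ↔ _
  simp only [Prod.neg_mk, Prod.mk.injEq]

lemma fareyGraph_adj_fareyMk {a b c d : ℤ} (hab : IsCoprime a b) (hcd : IsCoprime c d) :
    FareyGraph.Adj (fareyMk a b hab) (fareyMk c d hcd) ↔ |a * d - b * c| = 1 :=
  Iff.rfl

lemma abs_det_swap (A B C D : ℤ) : |C * B - D * A| = |A * D - B * C| := by
  rw [← abs_neg]
  ring_nf

theorem fareyGraph_commonNeighbors_add_sub {A B C D : ℤ} (hAD : |A * D - B * C| = 1)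
    (hAB : IsCoprime A B) (hCD : IsCoprime C D) (hP : IsCoprime (A + C) (B + D))
    (hR : IsCoprime (A - C) (B - D)) :
    FareyGraph.commonNeighbors (fareyMk (A + C) (B + D) hP) (fareyMk (A - C) (B - D) hR) =
      {fareyMk A B hAB, fareyMk C D hCD} := by
  have hCB : |C * B - D * A| = 1 := (abs_det_swap A B C D).trans hAD
  ext w
  obtain ⟨⟨⟨x, y⟩, hxy⟩, rfl⟩ := Quotient.exists_rep w
  change FareyGraph.Adj _ (fareyMk x y hxy) ∧ FareyGraph.Adj _ (fareyMk x y hxy) ↔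
    fareyMk x y hxy = _ ∨ fareyMk x y hxy = _
  simp only [fareyGraph_adj_fareyMk, fareyMk_eq_fareyMk_iff]
  rw [show (A + C) * y - (B + D) * x = (A * y - B * x) + (C * y - D * x) by ring,
    show (A - C) * y - (B - D) * x = (A * y - B * x) - (C * y - D * x) by ring,
    abs_add_eq_one_and_abs_sub_eq_one_iff]
  constructor
  · rintro (⟨hu, hv⟩ | ⟨hu, hv⟩)
    · exact .inl (eq_or_eq_neg_of_abs_det_eq_one hAD hu hv)
    · exact .inr (eq_or_eq_neg_of_abs_det_eq_one hCB hv hu)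
  · rintro ((⟨rfl, rfl⟩ | ⟨rfl, rfl⟩) | (⟨rfl, rfl⟩ | ⟨rfl, rfl⟩))
    · exact .inl ⟨by ring, hCB⟩
    · exact .inl ⟨by ring, by rw [← hAD]; ring_nf⟩
    · exact .inr ⟨hAD, by ring⟩
    · exact .inr ⟨by rw [← hAD, ← abs_neg]; ring_nf, by ring⟩

/-- If `(p,q)` and `(r,s)` are coprime pairs with `|ps - qr| = 2`,
then `p+r, q+s, p-r, q-s` are all even, the halved pairs are coprime, the common
neighbors of `[p,q]` and `[r,s]` in the Farey graph are exactly the two vertices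
`[(p+r)/2, (q+s)/2]` and `[(p-r)/2, (q-s)/2]`, and these two vertices are adjacent. -/
theorem farey_common_neighbors_of_det_two (p q r s : ℤ)
    (hpq : IsCoprime p q) (hrs : IsCoprime r s) (h : |p * s - q * r| = 2) :
    (2 ∣ p + r) ∧ (2 ∣ q + s) ∧ (2 ∣ p - r) ∧ (2 ∣ q - s) ∧
    ∃ (h₁ : IsCoprime ((p + r) / 2) ((q + s) / 2))
      (h₂ : IsCoprime ((p - r) / 2) ((q - s) / 2)),
      {w : FareyVertex | FareyGraph.Adj (fareyMk p q hpq) w ∧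
          FareyGraph.Adj (fareyMk r s hrs) w} =
        {fareyMk ((p + r) / 2) ((q + s) / 2) h₁,
         fareyMk ((p - r) / 2) ((q - s) / 2) h₂} ∧
      FareyGraph.Adj (fareyMk ((p + r) / 2) ((q + s) / 2) h₁)
        (fareyMk ((p - r) / 2) ((q - s) / 2) h₂) := by
  have h2 : 2 ∣ p * s - q * r := (dvd_abs _ _).mp (h ▸ dvd_rfl)
  obtain ⟨⟨C, hC⟩, ⟨D, hD⟩⟩ := two_dvd_sub_of_two_dvd_det hpq hrs h2
  obtain ⟨A, rfl⟩ : ∃ A, r = A - C := ⟨r + C, by ring⟩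
  obtain ⟨B, rfl⟩ : ∃ B, s = B - D := ⟨s + D, by ring⟩
  obtain rfl : p = A + C := by omega
  obtain rfl : q = B + D := by omega
  have hAD : |A * D - B * C| = 1 := by
    rw [show (A + C) * (B - D) - (B + D) * (A - C) = -2 * (A * D - B * C) by ring,
      abs_mul] at h
    simpa using h
  rw [show (A + C + (A - C)) / 2 = A by omega, show (B + D + (B - D)) / 2 = B by omega,
    show (A + C - (A - C)) / 2 = C by omega, show (B + D - (B - D)) / 2 = D by omega]
  have hAB : IsCoprime A B := coprime_of_det A B C D hAD
  have hCD : IsCoprime C D := coprime_of_det C D A B ((abs_det_swap A B C D).trans hAD)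
  exact ⟨⟨A, by ring⟩, ⟨B, by ring⟩, ⟨C, by ring⟩, ⟨D, by ring⟩, hAB, hCD,
    fareyGraph_commonNeighbors_add_sub hAD hAB hCD hpq hrs, hAD⟩
end

section
/- Let u and v be non-adjacent vertices of the Farey graph that have two distinct common neighbors c₁ and c₂ (so u, c₁, v, c₂ span a quadrilateral consisting of two quadrilateral triples with outer points u and v and central points c₁ and c₂). Then every walk in the Farey graph from u to v passes through c₁ or through c₂; that is, removing the two vertices c₁ and c₂ from the Farey graph disconnects u from v. -/
/-! An edge `pq` of the Farey graph separates it. By the Plücker relation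
`det(a,b) det(p,q) = det(a,p) det(b,q) - det(a,q) det(b,p)`, the sign of `det(w,p) det(w,q)`
cannot change along an edge `ab` avoiding `p` and `q`: opposite signs would make the right-hand
side at least `2` in absolute value. For a quadrilateral `u c₁ v c₂` with `u`, `v` non-adjacent,
the same relation forces `|det(c₁,c₂)| = 1`, so `c₁c₂` is an edge, and puts `u` and `v` on
opposite sides of it. -/

theorem SimpleGraph.Walk.iff_of_forall_adj {V : Type*} {G : SimpleGraph V} {P : V → Prop}
    {S : Set V} (h : ∀ ⦃x y⦄, G.Adj x y → x ∉ S → y ∉ S → (P x ↔ P y)) :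
    ∀ {s t : V} (W : G.Walk s t), (∀ x ∈ W.support, x ∉ S) → (P s ↔ P t)
  | _, _, .nil, _ => Iff.rfl
  | _, _, .cons hxy W, hW => by
    simp only [SimpleGraph.Walk.support_cons, List.mem_cons, forall_eq_or_imp] at hW
    exact (h hxy hW.1 (hW.2 _ W.start_mem_support)).trans (iff_of_forall_adj h W hW.2)

namespace Farey

def det {R : Type*} [CommRing R] (a b : R × R) : R := a.1 * b.2 - a.2 * b.1

section CommRing

variable {R : Type*} [CommRing R]

theorem det_mul_det (a b p q : R × R) :
    det a b * det p q = det a p * det b q - det a q * det b p := by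
  simp only [det]; ring

@[simp]
theorem det_self (a : R × R) : det a a = 0 := by
  simp only [det]; ring

@[simp]
theorem det_neg_left (a b : R × R) : det (-a) b = -det a b := by
  simp only [det, Prod.fst_neg, Prod.snd_neg]; ring

end CommRing

theorem eq_or_eq_neg_of_det_eq_zero {a b : ℤ × ℤ} (ha : IsCoprime a.1 a.2)
    (hb : IsCoprime b.1 b.2) (h : det a b = 0) : a = b ∨ a = -b := by
  obtain ⟨x, y, hxy⟩ := ha
  rw [det] at h
  -- `b = t • a` with `t = x b₁ + y b₂`, and coprimality of `b` forces `t = ±1`.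
  set t := x * b.1 + y * b.2
  have hb₁ : b.1 = t * a.1 := by linear_combination (-y) * h + (-b.1) * hxy
  have hb₂ : b.2 = t * a.2 := by linear_combination x * h + (-b.2) * hxy
  rcases Int.isUnit_iff.mp (hb.isUnit_of_dvd' ⟨a.1, hb₁⟩ ⟨a.2, hb₂⟩) with ht | ht
  · left; ext <;> simp [hb₁, hb₂, ht]
  · right; ext <;> simp [hb₁, hb₂, ht]

theorem two_le_abs_sub_of_mul_neg {s t : ℤ} (h : s * t < 0) : 2 ≤ |s - t| := by
  rcases mul_neg_iff.mp h with ⟨hs, ht⟩ | ⟨hs, ht⟩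
  · exact le_abs.mpr (Or.inl (by omega))
  · exact le_abs.mpr (Or.inr (by omega))

theorem det_mul_det_mul_nonneg {a b p q : ℤ × ℤ} (hab : |det a b| = 1) (hpq : |det p q| = 1) :
    0 ≤ (det a p * det a q) * (det b p * det b q) := by
  by_contra! h
  have := two_le_abs_sub_of_mul_neg (s := det a p * det b q) (t := det a q * det b p)
    (by linarith)
  rw [← det_mul_det, abs_mul, hab, hpq] at this
  norm_num at this

theorem det_mul_det_mul_neg {a b p q : ℤ × ℤ} (hap : |det a p| = 1) (haq : |det a q| = 1)
    (hbp : |det b p| = 1) (hbq : |det b q| = 1) (hab : det a b ≠ 0) (hpq : det p q ≠ 0) :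
    (det a p * det a q) * (det b p * det b q) < 0 := by
  have h := mul_ne_zero hab hpq
  rw [det_mul_det] at h
  rcases abs_eq zero_le_one |>.mp hap with h₁ | h₁ <;>
  rcases abs_eq zero_le_one |>.mp haq with h₂ | h₂ <;>
  rcases abs_eq zero_le_one |>.mp hbp with h₃ | h₃ <;>
  rcases abs_eq zero_le_one |>.mp hbq with h₄ | h₄ <;>
  rw [h₁, h₂, h₃, h₄] at h ⊢ <;> omega

theorem abs_det_eq_one_of_common_neighbors {a b p q : ℤ × ℤ} (hap : |det a p| = 1)
    (haq : |det a q| = 1) (hbp : |det b p| = 1) (hbq : |det b q| = 1) (hab : 2 ≤ |det a b|)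
    (hpq : det p q ≠ 0) : |det p q| = 1 := by
  have h : |det a b| * |det p q| ≤ 2 := by
    rw [← abs_mul, det_mul_det]
    calc |det a p * det b q - det a q * det b p|
        ≤ |det a p * det b q| + |det a q * det b p| := abs_sub _ _
      _ = 2 := by rw [abs_mul, abs_mul, hap, hbq, haq, hbp]; norm_num
  have := abs_pos.mpr hpq
  nlinarith

theorem adj_mk_iff {a b : FareyPair} : FareyGraph.Adj ⟦a⟧ ⟦b⟧ ↔ |det a.1 b.1| = 1 := Iff.rfl

theorem mk_eq_mk_iff_det_eq_zero {a b : FareyPair} :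
    (⟦a⟧ : FareyVertex) = ⟦b⟧ ↔ det a.1 b.1 = 0 := by
  rw [Quotient.eq]
  constructor
  · rintro (h | h) <;> simp [h]
  · exact eq_or_eq_neg_of_det_eq_zero a.2 b.2

theorem two_le_abs_det_of_not_adj {a b : FareyPair} (hne : (⟦a⟧ : FareyVertex) ≠ ⟦b⟧)
    (h : ¬FareyGraph.Adj ⟦a⟧ ⟦b⟧) : 2 ≤ |det a.1 b.1| := by
  have := abs_pos.mpr (mt mk_eq_mk_iff_det_eq_zero.mpr hne)
  rw [adj_mk_iff] at h
  omega

-- One of the two sides into which the edge `pq` cuts the Farey graph.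
def OnPositiveSide (p q : FareyPair) : FareyVertex → Prop :=
  Quotient.lift (fun w : FareyPair => 0 < det w.1 p.1 * det w.1 q.1) <| by
    rintro a b (h | h) <;> simp [h]

theorem onPositiveSide_iff_of_adj {p q : FareyPair} (hpq : FareyGraph.Adj ⟦p⟧ ⟦q⟧)
    ⦃x y : FareyVertex⦄ (hxy : FareyGraph.Adj x y) (hx : x ∉ ({⟦p⟧, ⟦q⟧} : Set FareyVertex))
    (hy : y ∉ ({⟦p⟧, ⟦q⟧} : Set FareyVertex)) : OnPositiveSide p q x ↔ OnPositiveSide p q y := by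
  obtain ⟨a, rfl⟩ := Quotient.exists_rep x
  obtain ⟨b, rfl⟩ := Quotient.exists_rep y
  simp only [Set.mem_insert_iff, Set.mem_singleton_iff, mk_eq_mk_iff_det_eq_zero, not_or] at hx hy
  have hpos : 0 < (det a.1 p.1 * det a.1 q.1) * (det b.1 p.1 * det b.1 q.1) :=
    (det_mul_det_mul_nonneg hxy hpq).lt_of_ne' (by simp [hx, hy])
  exact pos_iff_pos_of_mul_pos hpos

end Farey

open Farey in
/-- Let `u` and `v` be distinct non-adjacent vertices of the Farey
graph with two distinct common neighbors `c₁` and `c₂` (so `u, c₁, v, c₂` span a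
quadrilateral).  Then every walk in the Farey graph from `u` to `v` passes through
`c₁` or through `c₂`. -/
theorem farey_quadrilateral_separates (u v c₁ c₂ : FareyVertex)
    (hne : u ≠ v) (huv : ¬ FareyGraph.Adj u v) (hc : c₁ ≠ c₂)
    (h₁u : FareyGraph.Adj u c₁) (h₁v : FareyGraph.Adj v c₁)
    (h₂u : FareyGraph.Adj u c₂) (h₂v : FareyGraph.Adj v c₂) :
    ∀ W : FareyGraph.Walk u v, c₁ ∈ W.support ∨ c₂ ∈ W.support := by
  obtain ⟨a, rfl⟩ := Quotient.exists_rep u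
  obtain ⟨b, rfl⟩ := Quotient.exists_rep v
  obtain ⟨p, rfl⟩ := Quotient.exists_rep c₁
  obtain ⟨q, rfl⟩ := Quotient.exists_rep c₂
  intro W
  by_contra! hW
  have hab := two_le_abs_det_of_not_adj hne huv
  have hpq : det p.1 q.1 ≠ 0 := mt mk_eq_mk_iff_det_eq_zero.mpr hc
  have hadj : FareyGraph.Adj ⟦p⟧ ⟦q⟧ :=
    abs_det_eq_one_of_common_neighbors h₁u h₂u h₁v h₂v hab hpq
  have hside : OnPositiveSide p q ⟦a⟧ ↔ OnPositiveSide p q ⟦b⟧ :=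
    W.iff_of_forall_adj (S := {⟦p⟧, ⟦q⟧}) (onPositiveSide_iff_of_adj hadj) <| by
      rintro x hx (rfl | rfl : x = ⟦p⟧ ∨ x = ⟦q⟧)
      exacts [hW.1 hx, hW.2 hx]
  have hneg := det_mul_det_mul_neg h₁u h₂u h₁v h₂v (abs_pos.mp (two_pos.trans_le hab)) hpq
  rcases mul_neg_iff.mp hneg with ⟨ha, hb⟩ | ⟨ha, hb⟩
  · exact hb.not_gt (hside.mp ha)
  · exact ha.not_gt (hside.mpr hb)
end
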